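/- Let f be a differential function of r of some finite order n, i.e., a smooth function of t, x and the jet variables r^i_κ (i = 1,2,3; 0 ≤ κ ≤ n). Then 𝔅f = 0 holds identically in all jet variables if and only if there exist κ ∈ ℕ₀ and a smooth function g : ℝ^{κ+1} → ℝ such that f = g(ω⁰, ω¹, …, ω^κ) identically. -/

import Mathlib

/- STATEMENT 8 (Lemma on differential functions annihilated by 𝔅):
a differential function f of r satisfies 𝔅f = 0 identically iff it is a smooth
function of finitely many ω's, where ω⁰ = r³, ω^{κ+1} = e^{r²−r¹} 𝒟_x ω^κ. -/

noncomputable section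

namespace IDFM

/-- The infinite jet space with coordinates t, x and r^i_κ (i ranging over
`Fin 3`, κ ∈ ℕ): `p.2.2 i κ` represents ∂^κ r^{i+1}/∂x^κ. -/
abbrev Jet : Type := ℝ × ℝ × (Fin 3 → ℕ → ℝ)

/-- Directional (Gateaux) derivative of a function on jet space. -/
def gd (f : Jet → ℝ) (p v : Jet) : ℝ := deriv (fun s : ℝ => f (p + s • v)) 0

/-- The restricted total derivative operator
𝒟_x = ∂_x + Σ_{κ,i} r^i_{κ+1} ∂_{r^i_κ}. -/
def Dx (f : Jet → ℝ) (p : Jet) : ℝ :=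
  gd f p (0, 1, fun i κ => p.2.2 i (κ + 1))

/-- The characteristic speeds V¹ = r¹+r²+1, V² = r¹+r²−1, V³ = r¹+r². -/
def V (i : Fin 3) (p : Jet) : ℝ :=
  p.2.2 0 0 + p.2.2 1 0 + if i = 0 then 1 else if i = 1 then -1 else 0

/-- The restricted total derivative operator
𝒟_t = ∂_t − Σ_{κ,i} 𝒟_x^κ(V^i r^i_1) ∂_{r^i_κ}. -/
def Dt (f : Jet → ℝ) (p : Jet) : ℝ :=
  gd f p (1, 0, fun i κ => -(Dx^[κ] (fun q => V i q * q.2.2 i 1) p))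

/-- The operator 𝔅 = 𝒟_t + (r¹+r²) 𝒟_x. -/
def Bop (f : Jet → ℝ) (p : Jet) : ℝ :=
  Dt f p + (p.2.2 0 0 + p.2.2 1 0) * Dx f p

/-- The differential functions ω⁰ := r³, ω^{κ+1} := e^{r²−r¹} 𝒟_x ω^κ. -/
def omegaJ : ℕ → Jet → ℝ
  | 0 => fun p => p.2.2 2 0
  | κ + 1 => fun p => Real.exp (p.2.2 1 0 - p.2.2 0 0) * Dx (omegaJ κ) p

/-- `f` is a smooth differential function of `r` of order at most `n`: it is a
smooth function of t, x and the jet variables r^i_κ, 0 ≤ κ ≤ n. -/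
def IsDiffFun (n : ℕ) (f : Jet → ℝ) : Prop :=
  ∃ F : ℝ × ℝ × (Fin 3 → Fin (n + 1) → ℝ) → ℝ,
    ContDiff ℝ (⊤ : ℕ∞) F ∧ ∀ p : Jet, f p = F (p.1, p.2.1, fun i κ => p.2.2 i κ.1)



abbrev E (N : ℕ) : Type := ℝ × ℝ × (Fin 3 → Fin (N+1) → ℝ)
def pr (N : ℕ) (p : Jet) : E N := (p.1, p.2.1, fun i κ => p.2.2 i κ.1)

lemma pr_affine (N : ℕ) (p v : Jet) (s : ℝ) : pr N (p + s • v) = pr N p + s • pr N v := rfl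

/-- directional derivative predicate along the line `p + s•v`. -/
def HGD (f : Jet → ℝ) (p v : Jet) (d : ℝ) : Prop :=
  HasDerivAt (fun s : ℝ => f (p + s • v)) d 0

lemma HGD.gd_eq {f p v d} (h : HGD f p v d) : gd f p v = d := h.deriv

lemma hgd_const (c : ℝ) (p v : Jet) : HGD (fun _ => c) p v 0 := hasDerivAt_const _ _

lemma hgd_coord (i : Fin 3) (κ : ℕ) (p v : Jet) :
    HGD (fun q => q.2.2 i κ) p v (v.2.2 i κ) := by
  show HasDerivAt (fun s : ℝ => p.2.2 i κ + s * v.2.2 i κ) _ 0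
  simpa using ((hasDerivAt_id (0:ℝ)).mul_const (v.2.2 i κ)).const_add (p.2.2 i κ)

lemma hgd_t (p v : Jet) : HGD (fun q => q.1) p v v.1 := by
  show HasDerivAt (fun s : ℝ => p.1 + s * v.1) _ 0
  simpa using ((hasDerivAt_id (0:ℝ)).mul_const v.1).const_add p.1

lemma hgd_x (p v : Jet) : HGD (fun q => q.2.1) p v v.2.1 := by
  show HasDerivAt (fun s : ℝ => p.2.1 + s * v.2.1) _ 0
  simpa using ((hasDerivAt_id (0:ℝ)).mul_const v.2.1).const_add p.2.1

lemma HGD.add {f g p v d e} (hf : HGD f p v d) (hg : HGD g p v e) :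
    HGD (fun q => f q + g q) p v (d + e) := HasDerivAt.add hf hg

lemma HGD.sub {f g p v d e} (hf : HGD f p v d) (hg : HGD g p v e) :
    HGD (fun q => f q - g q) p v (d - e) := HasDerivAt.sub hf hg

lemma HGD.neg {f p v d} (hf : HGD f p v d) : HGD (fun q => -(f q)) p v (-d) := HasDerivAt.neg hf

lemma HGD.mul {f g p v d e} (hf : HGD f p v d) (hg : HGD g p v e) :
    HGD (fun q => f q * g q) p v (d * g p + f p * e) := by
  have := HasDerivAt.fun_mul hf hg
  unfold HGD
  simpa using this

lemma HGD.const_mul {f p v d} (c : ℝ) (hf : HGD f p v d) :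
    HGD (fun q => c * f q) p v (c * d) := HasDerivAt.const_mul c hf

lemma HGD.exp {f p v d} (hf : HGD f p v d) :
    HGD (fun q => Real.exp (f q)) p v (Real.exp (f p) * d) := by
  have h0 : p + (0:ℝ) • v = p := by simp
  have := (Real.hasDerivAt_exp (f (p + (0:ℝ) • v))).comp (0:ℝ) hf
  rw [h0] at this
  exact this

lemma HGD.sum {ι : Type*} {s : Finset ι} {f : ι → Jet → ℝ} {p v : Jet} {d : ι → ℝ}
    (h : ∀ i ∈ s, HGD (f i) p v (d i)) :
    HGD (fun q => ∑ i ∈ s, f i q) p v (∑ i ∈ s, d i) := HasDerivAt.fun_sum h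

lemma HGD.congr_fun {f g : Jet → ℝ} {p v d} (h : HGD f p v d) (hfg : ∀ q, g q = f q) :
    HGD g p v d := by
  have : g = f := funext hfg
  rw [this]; exact h

/-- representation of a differential function through finitely many jet coordinates -/
def Rep (N : ℕ) (f : Jet → ℝ) (F : E N → ℝ) : Prop :=
  ContDiff ℝ (⊤ : ℕ∞) F ∧ ∀ p, f p = F (pr N p)

lemma Rep.hgd {N f F} (h : Rep N f F) (p v : Jet) :
    HGD f p v (fderiv ℝ F (pr N p) (pr N v)) := by
  have hline : HasDerivAt (fun s : ℝ => pr N p + s • pr N v) (pr N v) 0 := by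
    simpa using ((hasDerivAt_id (0:ℝ)).smul_const (pr N v)).const_add (pr N p)
  have hF : HasFDerivAt F (fderiv ℝ F (pr N p)) (pr N p) :=
    (h.1.differentiable (by simp) (pr N p)).hasFDerivAt
  have h0 : pr N p + (0:ℝ) • pr N v = pr N p := by simp
  have hF' : HasFDerivAt F (fderiv ℝ F (pr N p)) (pr N p + (0:ℝ) • pr N v) := by rw [h0]; exact hF
  have hcomp := hF'.comp_hasDerivAt 0 hline
  unfold HGD
  have heq : (fun s : ℝ => f (p + s • v)) = F ∘ fun s : ℝ => pr N p + s • pr N v := by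
    funext s; rw [h.2, pr_affine]; rfl
  rw [heq]
  exact hcomp

/-- x-direction -/
def vx (p : Jet) : Jet := (0, 1, fun i κ => p.2.2 i (κ + 1))
/-- t-direction -/
def vt (p : Jet) : Jet := (1, 0, fun i κ => -(Dx^[κ] (fun q => V i q * q.2.2 i 1) p))

lemma Dx_eq_gd (f p) : Dx f p = gd f p (vx p) := rfl
lemma Dt_eq_gd (f p) : Dt f p = gd f p (vt p) := rfl

/-- the coefficients of 𝒟_t -/
def K (i : Fin 3) (κ : ℕ) (p : Jet) : ℝ := Dx^[κ] (fun q => V i q * q.2.2 i 1) p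

lemma vt_eval (p : Jet) : vt p = (1, 0, fun i κ => -(K i κ p)) := rfl

lemma K_succ (i κ p) : K i (κ+1) p = Dx (K i κ) p := by
  unfold K
  rw [Function.iterate_succ_apply']

def cc : Fin 3 → ℝ := fun i => if i = 0 then 1 else if i = 1 then -1 else 0

lemma V_eq (i p) : V i p = p.2.2 0 0 + p.2.2 1 0 + cc i := rfl

/-- explicit formula ingredients -/
def VD (i : Fin 3) (j : ℕ) (ρ : Fin 3 → ℕ → ℝ) : ℝ :=
  ρ 0 j + ρ 1 j + if j = 0 then cc i else 0

def KPa (i : Fin 3) (κ : ℕ) (ρ : Fin 3 → ℕ → ℝ) : ℝ :=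
  ∑ j ∈ Finset.range (κ+1), (κ.choose j : ℝ) * VD i j ρ * ρ i (κ+1-j)

lemma KPa_congr {i κ ρ ρ'} (h : ∀ a m, m ≤ κ + 1 → ρ a m = ρ' a m) :
    KPa i κ ρ = KPa i κ ρ' := by
  unfold KPa VD
  refine Finset.sum_congr rfl fun j hj => ?_
  have hj' : j ≤ κ := by simpa [Nat.lt_succ_iff] using hj
  rw [h 0 j (by omega), h 1 j (by omega), h i (κ+1-j) (by omega)]

lemma hgd_VD (i : Fin 3) (j : ℕ) (p : Jet) :
    HGD (fun q => VD i j q.2.2) p (vx p) (VD i (j+1) p.2.2) := by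
  have h1 := (hgd_coord 0 j p (vx p)).add (hgd_coord 1 j p (vx p))
  have h2 := h1.add (hgd_const (if j = 0 then cc i else 0) p (vx p))
  have : HGD (fun q => VD i j q.2.2) p (vx p)
      ((vx p).2.2 0 j + (vx p).2.2 1 j + 0) := by
    exact h2.congr_fun fun q => rfl
  simpa [vx, VD] using this

lemma pascal_sum (i : Fin 3) (κ : ℕ) (ρ : Fin 3 → ℕ → ℝ) :
    ∑ j ∈ Finset.range (κ+1), (κ.choose j : ℝ) *
      (VD i (j+1) ρ * ρ i (κ+1-j) + VD i j ρ * ρ i (κ+2-j)) = KPa i (κ+1) ρ := by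
  have hsplit : ∑ j ∈ Finset.range (κ+1), (κ.choose j : ℝ) *
      (VD i (j+1) ρ * ρ i (κ+1-j) + VD i j ρ * ρ i (κ+2-j))
      = (∑ j ∈ Finset.range (κ+1), (κ.choose j : ℝ) * (VD i (j+1) ρ * ρ i (κ+1-j)))
      + ∑ j ∈ Finset.range (κ+1), (κ.choose j : ℝ) * (VD i j ρ * ρ i (κ+2-j)) := by
    rw [← Finset.sum_add_distrib]
    exact Finset.sum_congr rfl fun j _ => by ring
  have hB : ∑ j ∈ Finset.range (κ+1), (κ.choose j : ℝ) * (VD i j ρ * ρ i (κ+2-j))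
      = (∑ j ∈ Finset.range κ, (κ.choose (j+1) : ℝ) * (VD i (j+1) ρ * ρ i (κ+1-j)))
      + (κ.choose 0 : ℝ) * (VD i 0 ρ * ρ i (κ+2)) := by
    rw [Finset.sum_range_succ' (fun j => (κ.choose j : ℝ) * (VD i j ρ * ρ i (κ+2-j))) κ]
    congr 1
    exact Finset.sum_congr rfl fun j _ => by rw [Nat.succ_sub_succ]
  have hB' : ∑ j ∈ Finset.range κ, (κ.choose (j+1) : ℝ) * (VD i (j+1) ρ * ρ i (κ+1-j))
      = ∑ j ∈ Finset.range (κ+1), (κ.choose (j+1) : ℝ) * (VD i (j+1) ρ * ρ i (κ+1-j)) := by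
    rw [Finset.sum_range_succ]
    simp
  have hR : KPa i (κ+1) ρ
      = (∑ j ∈ Finset.range (κ+1), ((κ+1).choose (j+1) : ℝ) * (VD i (j+1) ρ * ρ i (κ+1-j)))
      + ((κ+1).choose 0 : ℝ) * (VD i 0 ρ * ρ i (κ+2)) := by
    unfold KPa
    rw [Finset.sum_range_succ' (fun j => ((κ+1).choose j : ℝ) * VD i j ρ * ρ i (κ+2-j)) (κ+1)]
    congr 1
    · exact Finset.sum_congr rfl fun j _ => by rw [Nat.succ_sub_succ]; ring
    · norm_num
  rw [hsplit, hB, hB', hR]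
  have : ∀ j, ((κ+1).choose (j+1) : ℝ) = (κ.choose j : ℝ) + (κ.choose (j+1) : ℝ) := by
    intro j; rw [Nat.choose_succ_succ]; push_cast; ring
  have hAB : (∑ j ∈ Finset.range (κ+1), (κ.choose j : ℝ) * (VD i (j+1) ρ * ρ i (κ+1-j)))
      + ∑ j ∈ Finset.range (κ+1), (κ.choose (j+1) : ℝ) * (VD i (j+1) ρ * ρ i (κ+1-j))
      = ∑ j ∈ Finset.range (κ+1), ((κ+1).choose (j+1) : ℝ) * (VD i (j+1) ρ * ρ i (κ+1-j)) := by
    rw [← Finset.sum_add_distrib]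
    exact Finset.sum_congr rfl fun j _ => by rw [this j]; ring
  rw [← add_assoc, hAB]
  norm_num

lemma K_eq (i : Fin 3) (κ : ℕ) (p : Jet) : K i κ p = KPa i κ p.2.2 := by
  induction κ generalizing p with
  | zero =>
    show V i p * p.2.2 i 1 = _
    unfold KPa
    simp [VD, V_eq]
  | succ κ ih =>
    rw [K_succ]
    have hfun : K i κ = fun q => KPa i κ q.2.2 := funext fun q => ih q
    rw [hfun]
    have hterm : ∀ j ∈ Finset.range (κ+1),
        HGD (fun q => (κ.choose j : ℝ) * VD i j q.2.2 * q.2.2 i (κ+1-j)) p (vx p)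
          ((κ.choose j : ℝ) * (VD i (j+1) p.2.2 * p.2.2 i (κ+1-j)
            + VD i j p.2.2 * p.2.2 i (κ+2-j))) := by
      intro j hj
      have hj' : j ≤ κ := by simpa [Nat.lt_succ_iff] using hj
      have h1 := (hgd_VD i j p).mul (hgd_coord i (κ+1-j) p (vx p))
      have h2 := h1.const_mul (κ.choose j : ℝ)
      have harg : (vx p).2.2 i (κ+1-j) = p.2.2 i (κ+2-j) := by
        show p.2.2 i (κ+1-j+1) = p.2.2 i (κ+2-j)
        have : κ+1-j+1 = κ+2-j := by omega
        rw [this]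
      rw [harg] at h2
      exact h2.congr_fun (fun q => by ring)
    have hsum := HGD.sum hterm
    have hD : Dx (fun q => KPa i κ q.2.2) p
        = ∑ j ∈ Finset.range (κ+1), (κ.choose j : ℝ) *
            (VD i (j+1) p.2.2 * p.2.2 i (κ+1-j) + VD i j p.2.2 * p.2.2 i (κ+2-j)) := by
      rw [Dx_eq_gd]
      exact (hsum.congr_fun fun q => rfl).gd_eq
    rw [hD, pascal_sum]

/-! ### finite-dimensional representatives of `Dx` and `Dt` -/

/-- coordinate continuous linear map on `E N` -/
def cL (N : ℕ) (i : Fin 3) (κ : Fin (N+1)) : E N →L[ℝ] ℝ :=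
  (ContinuousLinearMap.proj κ).comp ((ContinuousLinearMap.proj i).comp
    ((ContinuousLinearMap.snd ℝ ℝ (Fin 3 → Fin (N+1) → ℝ)).comp
      (ContinuousLinearMap.snd ℝ ℝ (ℝ × (Fin 3 → Fin (N+1) → ℝ)))))

lemma cL_apply (N : ℕ) (i : Fin 3) (κ : Fin (N+1)) (q : E N) : cL N i κ q = q.2.2 i κ := rfl

/-- extension of truncated jet coordinates by zero -/
def extE {N : ℕ} (q : E N) : Fin 3 → ℕ → ℝ := fun a m => if h : m < N+1 then q.2.2 a ⟨m, h⟩ else 0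

lemma contDiff_extE (N : ℕ) (a : Fin 3) (m : ℕ) : ContDiff ℝ (⊤ : ℕ∞) (fun q : E N => extE q a m) := by
  unfold extE
  by_cases h : m < N+1
  · simp only [dif_pos h]; exact (cL N a ⟨m,h⟩).contDiff
  · simp only [dif_neg h]; exact contDiff_const

lemma extE_pr {N : ℕ} (p : Jet) (a : Fin 3) (m : ℕ) (h : m ≤ N) :
    extE (pr N p) a m = p.2.2 a m := by
  unfold extE pr; rw [dif_pos (by omega : m < N+1)]

lemma contDiff_KPaE (N : ℕ) (i : Fin 3) (κ : ℕ) :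
    ContDiff ℝ (⊤ : ℕ∞) (fun q : E N => KPa i κ (extE q)) := by
  unfold KPa VD
  apply ContDiff.sum; intro j _
  exact (contDiff_const.mul (((contDiff_extE N 0 j).add (contDiff_extE N 1 j)).add
    contDiff_const)).mul (contDiff_extE N i (κ+1-j))

/-- truncation `E (N+1) → E N` -/
def dbL (N : ℕ) : E (N+1) →L[ℝ] E N :=
  (ContinuousLinearMap.fst ℝ ℝ _).prod
    (((ContinuousLinearMap.fst ℝ ℝ _).comp (ContinuousLinearMap.snd ℝ ℝ _)).prod
      (ContinuousLinearMap.pi fun i => ContinuousLinearMap.pi fun κ : Fin (N+1) =>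
        cL (N+1) i ⟨κ.1, by omega⟩))

/-- jet shift `E (N+1) → (third component of E N)` -/
def shL (N : ℕ) : E (N+1) →L[ℝ] (Fin 3 → Fin (N+1) → ℝ) :=
  ContinuousLinearMap.pi fun i => ContinuousLinearMap.pi fun κ : Fin (N+1) =>
    cL (N+1) i ⟨κ.1+1, by omega⟩

lemma dbL_pr (N : ℕ) (p : Jet) : dbL N (pr (N+1) p) = pr N p := rfl

lemma shL_pr_vx (N : ℕ) (p : Jet) :
    (((0:ℝ), (1:ℝ), shL N (pr (N+1) p)) : E N) = pr N (vx p) := rfl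

def DxF {N : ℕ} (F : E N → ℝ) (q : E (N+1)) : ℝ :=
  fderiv ℝ F (dbL N q) (((0:ℝ), (1:ℝ), shL N q))

def DtF {N : ℕ} (F : E N → ℝ) (q : E (N+1)) : ℝ :=
  fderiv ℝ F (dbL N q) (((1:ℝ), (0:ℝ), fun i (κ : Fin (N+1)) => -(KPa i κ.1 (extE q))))

lemma Rep.dx {N : ℕ} {f : Jet → ℝ} {F : E N → ℝ} (h : Rep N f F) :
    Rep (N+1) (Dx f) (DxF F) := by
  constructor
  · apply ContDiff.clm_apply
    · exact (h.1.fderiv_right (by simp)).comp (dbL N).contDiff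
    · exact contDiff_const.prodMk (contDiff_const.prodMk (shL N).contDiff)
  · intro p
    rw [Dx_eq_gd, (h.hgd p (vx p)).gd_eq]
    rfl

lemma pr_vt (N : ℕ) (p : Jet) :
    pr N (vt p) = (((1:ℝ), (0:ℝ), fun i (κ : Fin (N+1)) => -(KPa i κ.1 (extE (pr (N+1) p)))) : E N) := by
  refine Prod.ext rfl (Prod.ext rfl ?_)
  funext i κ
  show -(K i κ.1 p) = -(KPa i κ.1 (extE (pr (N+1) p)))
  rw [K_eq, KPa_congr (ρ' := extE (pr (N+1) p)) (fun a m hm => (extE_pr p a m (by omega : m ≤ N+1)).symm)]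

lemma Rep.dt {N : ℕ} {f : Jet → ℝ} {F : E N → ℝ} (h : Rep N f F) :
    Rep (N+1) (Dt f) (DtF F) := by
  constructor
  · apply ContDiff.clm_apply
    · exact (h.1.fderiv_right (by simp)).comp (dbL N).contDiff
    · refine contDiff_const.prodMk (contDiff_const.prodMk ?_)
      exact contDiff_pi.2 fun i => contDiff_pi.2 fun κ => (contDiff_KPaE (N+1) i κ.1).neg
  · intro p
    rw [Dt_eq_gd, (h.hgd p (vt p)).gd_eq, pr_vt]
    rfl

/-- the representative of `K i κ` at level `N+1` -/
lemma Rep.Krep (N : ℕ) (i : Fin 3) (κ : ℕ) (hκ : κ ≤ N) :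
    Rep (N+1) (K i κ) (fun q => KPa i κ (extE q)) := by
  refine ⟨contDiff_KPaE (N+1) i κ, fun p => ?_⟩
  rw [K_eq]
  exact KPa_congr fun a m hm => (extE_pr p a m (by omega)).symm

theorem DtDx_comm {N : ℕ} {f : Jet → ℝ} {F : E N → ℝ} (h : Rep N f F) (p : Jet) :
    Dt (Dx f) p = Dx (Dt f) p := by
  have hF := h.1
  have hfd : ContDiff ℝ (⊤ : ℕ∞) (fderiv ℝ F) := hF.fderiv_right (by simp)
  have hdF : ∀ y, HasFDerivAt F (fderiv ℝ F y) y := fun y => (hF.differentiable (by simp) y).hasFDerivAt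
  have hdF2 : ∀ y, HasFDerivAt (fderiv ℝ F) (fderiv ℝ (fderiv ℝ F) y) y :=
    fun y => (hfd.differentiable (by simp) y).hasFDerivAt
  have hc : HasFDerivAt (fun q : E (N+1) => fderiv ℝ F (dbL N q))
      ((fderiv ℝ (fderiv ℝ F) (dbL N (pr (N+1) p))).comp (dbL N)) (pr (N+1) p) :=
    (hdF2 (dbL N (pr (N+1) p))).comp (pr (N+1) p) (dbL N).hasFDerivAt
  -- the affine family q ↦ (0,1,shL q)
  have hux : HasFDerivAt (fun q : E (N+1) => (((0:ℝ), (1:ℝ), shL N q) : E N))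
      ((0 : E (N+1) →L[ℝ] ℝ).prod ((0 : E (N+1) →L[ℝ] ℝ).prod (shL N))) (pr (N+1) p) := by
    have heq : (fun q : E (N+1) => (((0:ℝ), (1:ℝ), shL N q) : E N))
        = fun q => (((0:ℝ), (1:ℝ), (0 : Fin 3 → Fin (N+1) → ℝ)) : E N)
            + ((0 : E (N+1) →L[ℝ] ℝ).prod ((0 : E (N+1) →L[ℝ] ℝ).prod (shL N))) q := by
      funext q
      refine Prod.ext ?_ (Prod.ext ?_ ?_) <;>
        simp [ContinuousLinearMap.prod_apply]
    rw [heq]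
    exact (((0 : E (N+1) →L[ℝ] ℝ).prod ((0 : E (N+1) →L[ℝ] ℝ).prod (shL N))).hasFDerivAt).const_add _
  -- the nonlinear family q ↦ (1,0,-KPa)
  have hpi : HasFDerivAt
      (fun q : E (N+1) => (fun i (κ : Fin (N+1)) => -(KPa i κ.1 (extE q))))
      (ContinuousLinearMap.pi fun i => ContinuousLinearMap.pi fun κ : Fin (N+1) =>
        -(fderiv ℝ (fun q : E (N+1) => KPa i κ.1 (extE q)) (pr (N+1) p))) (pr (N+1) p) := by
    apply hasFDerivAt_pi'.2
    intro i
    rw [ContinuousLinearMap.proj_pi]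
    apply hasFDerivAt_pi'.2
    intro κ
    rw [ContinuousLinearMap.proj_pi]
    exact (((contDiff_KPaE (N+1) i κ.1).differentiable (by simp) (pr (N+1) p)).hasFDerivAt).neg
  have hut : HasFDerivAt
      (fun q : E (N+1) => (((1:ℝ), (0:ℝ), fun i (κ : Fin (N+1)) => -(KPa i κ.1 (extE q))) : E N))
      ((0 : E (N+1) →L[ℝ] ℝ).prod ((0 : E (N+1) →L[ℝ] ℝ).prod
        (ContinuousLinearMap.pi fun i => ContinuousLinearMap.pi fun κ : Fin (N+1) =>
          -(fderiv ℝ (fun q : E (N+1) => KPa i κ.1 (extE q)) (pr (N+1) p))))) (pr (N+1) p) := by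
    exact (hasFDerivAt_const (1:ℝ) _).prodMk ((hasFDerivAt_const (0:ℝ) _).prodMk hpi)
  -- fderiv of DxF F
  have hDxF : fderiv ℝ (DxF F) (pr (N+1) p)
      = (fderiv ℝ F (dbL N (pr (N+1) p))).comp
          ((0 : E (N+1) →L[ℝ] ℝ).prod ((0 : E (N+1) →L[ℝ] ℝ).prod (shL N)))
        + (((fderiv ℝ (fderiv ℝ F) (dbL N (pr (N+1) p))).comp (dbL N)).flip
            (((0:ℝ), (1:ℝ), shL N (pr (N+1) p)))) :=
    (hc.clm_apply hux).fderiv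
  have hDtF : fderiv ℝ (DtF F) (pr (N+1) p)
      = (fderiv ℝ F (dbL N (pr (N+1) p))).comp
          ((0 : E (N+1) →L[ℝ] ℝ).prod ((0 : E (N+1) →L[ℝ] ℝ).prod
            (ContinuousLinearMap.pi fun i => ContinuousLinearMap.pi fun κ : Fin (N+1) =>
              -(fderiv ℝ (fun q : E (N+1) => KPa i κ.1 (extE q)) (pr (N+1) p)))))
        + (((fderiv ℝ (fderiv ℝ F) (dbL N (pr (N+1) p))).comp (dbL N)).flip
            (((1:ℝ), (0:ℝ), fun i (κ : Fin (N+1)) => -(KPa i κ.1 (extE (pr (N+1) p)))))) :=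
    (hc.clm_apply hut).fderiv
  have e1 : Dt (Dx f) p
      = fderiv ℝ F (pr N p) (((0:ℝ), (0:ℝ), fun i (κ : Fin (N+1)) => -(K i (κ.1+1) p)) : E N)
        + fderiv ℝ (fderiv ℝ F) (pr N p) (pr N (vt p)) (pr N (vx p)) := by
    rw [Dt_eq_gd, ((Rep.dx h).hgd p (vt p)).gd_eq, hDxF]
    simp only [ContinuousLinearMap.add_apply, ContinuousLinearMap.comp_apply,
      ContinuousLinearMap.flip_apply, ContinuousLinearMap.prod_apply,
      ContinuousLinearMap.zero_apply]
    rfl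
  have e2 : Dx (Dt f) p
      = fderiv ℝ F (pr N p) (((0:ℝ), (0:ℝ), fun i (κ : Fin (N+1)) => -(K i (κ.1+1) p)) : E N)
        + fderiv ℝ (fderiv ℝ F) (pr N p) (pr N (vx p)) (pr N (vt p)) := by
    rw [Dx_eq_gd, ((Rep.dt h).hgd p (vx p)).gd_eq, hDtF]
    simp only [ContinuousLinearMap.add_apply, ContinuousLinearMap.comp_apply,
      ContinuousLinearMap.flip_apply, ContinuousLinearMap.prod_apply,
      ContinuousLinearMap.zero_apply]
    congr 1
    · congr 1
      refine Prod.ext rfl (Prod.ext rfl ?_)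
      funext i κ
      show -(fderiv ℝ (fun q : E (N+1) => KPa i κ.1 (extE q)) (pr (N+1) p) (pr (N+1) (vx p)))
        = -(K i (κ.1+1) p)
      have hK := ((Rep.Krep N i κ.1 (by omega : κ.1 ≤ N)).hgd p (vx p)).gd_eq
      rw [← hK, ← Dx_eq_gd, ← K_succ]
    · rw [← pr_vt]
      rfl
  rw [e1, e2]
  congr 1
  exact second_derivative_symmetric hdF (hdF2 (pr N p)) _ _

lemma Rep.hgdDx {N : ℕ} {f : Jet → ℝ} {F : E N → ℝ} (h : Rep N f F) (p : Jet) :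
    HGD f p (vx p) (Dx f p) := by
  rw [Dx_eq_gd, (h.hgd p (vx p)).gd_eq]; exact h.hgd p (vx p)

lemma Rep.hgdDt {N : ℕ} {f : Jet → ℝ} {F : E N → ℝ} (h : Rep N f F) (p : Jet) :
    HGD f p (vt p) (Dt f p) := by
  rw [Dt_eq_gd, (h.hgd p (vt p)).gd_eq]; exact h.hgd p (vt p)

lemma Bop_eq_of_hgd {f : Jet → ℝ} {p : Jet} {dt dx : ℝ}
    (ht : HGD f p (vt p) dt) (hx : HGD f p (vx p) dx) :
    Bop f p = dt + (p.2.2 0 0 + p.2.2 1 0) * dx := by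
  unfold Bop
  rw [Dt_eq_gd, Dx_eq_gd, ht.gd_eq, hx.gd_eq]

lemma Bop_coord (i : Fin 3) (κ : ℕ) (p : Jet) :
    Bop (fun q => q.2.2 i κ) p
      = (p.2.2 0 0 + p.2.2 1 0) * p.2.2 i (κ+1) - K i κ p := by
  rw [Bop_eq_of_hgd (hgd_coord i κ p (vt p)) (hgd_coord i κ p (vx p))]
  show -(K i κ p) + (p.2.2 0 0 + p.2.2 1 0) * p.2.2 i (κ+1) = _
  ring

lemma Dx_zero (p : Jet) : Dx (fun _ => (0:ℝ)) p = 0 :=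
  (hgd_const 0 p (vx p)).gd_eq

lemma Bop_expmul {N : ℕ} {w : Jet → ℝ} {W : E N → ℝ} (h : Rep N w W) (p : Jet) :
    Bop (fun q => Real.exp (q.2.2 1 0 - q.2.2 0 0) * w q) p
      = Real.exp (p.2.2 1 0 - p.2.2 0 0) * ((p.2.2 0 1 + p.2.2 1 1) * w p + Bop w p) := by
  have hDt := ((hgd_coord 1 0 p (vt p)).sub (hgd_coord 0 0 p (vt p))).exp
  have hDx := ((hgd_coord 1 0 p (vx p)).sub (hgd_coord 0 0 p (vx p))).exp
  have Ht := hDt.mul (h.hgdDt p)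
  have Hx := hDx.mul (h.hgdDx p)
  rw [Bop_eq_of_hgd Ht Hx]
  have e1 : (vt p).2.2 1 0 = -(V 1 p * p.2.2 1 1) := rfl
  have e2 : (vt p).2.2 0 0 = -(V 0 p * p.2.2 0 1) := rfl
  have e3 : (vx p).2.2 1 0 = p.2.2 1 1 := rfl
  have e4 : (vx p).2.2 0 0 = p.2.2 0 1 := rfl
  rw [e1, e2, e3, e4, show Bop w p = Dt w p + (p.2.2 0 0 + p.2.2 1 0) * Dx w p from rfl]
  rw [V_eq, V_eq, show cc 1 = -1 from rfl, show cc 0 = 1 from rfl]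
  ring

lemma Bop_Dx {N : ℕ} {u : Jet → ℝ} {U : E N → ℝ} (h : Rep N u U) (p : Jet) :
    Bop (Dx u) p = Dx (Bop u) p - (p.2.2 0 1 + p.2.2 1 1) * Dx u p := by
  have hcomm := DtDx_comm h p
  have h1 := ((h.dt).hgdDx p).add
    (((hgd_coord 0 0 p (vx p)).add (hgd_coord 1 0 p (vx p))).mul ((h.dx).hgdDx p))
  have h2 : Dx (Bop u) p
      = Dx (Dt u) p + (((vx p).2.2 0 0 + (vx p).2.2 1 0) * Dx u p
          + (p.2.2 0 0 + p.2.2 1 0) * Dx (Dx u) p) := by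
    rw [Dx_eq_gd]
    exact (h1.congr_fun fun q => rfl).gd_eq
  rw [show Bop (Dx u) p = Dt (Dx u) p + (p.2.2 0 0 + p.2.2 1 0) * Dx (Dx u) p from rfl,
    hcomm, h2]
  show _ = Dx (Dt u) p + ((p.2.2 0 1 + p.2.2 1 1) * Dx u p + _) - _
  ring

/-- finite-dimensional representative of ω^κ -/
def omegaF : (κ : ℕ) → E κ → ℝ
  | 0 => fun q => q.2.2 2 0
  | κ+1 => fun q => Real.exp (q.2.2 1 0 - q.2.2 0 0) * DxF (omegaF κ) q

lemma omega_rep : ∀ κ : ℕ, Rep κ (omegaJ κ) (omegaF κ) := by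
  intro κ
  induction κ with
  | zero =>
    exact ⟨(cL 0 2 0).contDiff, fun p => rfl⟩
  | succ κ ih =>
    constructor
    · exact (Real.contDiff_exp.comp (((cL (κ+1) 1 0).contDiff).sub
        ((cL (κ+1) 0 0).contDiff))).mul (ih.dx).1
    · intro p
      show Real.exp (p.2.2 1 0 - p.2.2 0 0) * Dx (omegaJ κ) p = _
      rw [(ih.dx).2 p]
      rfl

theorem Bop_omega : ∀ (κ : ℕ) (p : Jet), Bop (omegaJ κ) p = 0 := by
  intro κ
  induction κ with
  | zero =>
    intro p
    have : Bop (omegaJ 0) p = Bop (fun q => q.2.2 2 0) p := rfl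
    rw [this, Bop_coord]
    show _ - V 2 p * p.2.2 2 1 = 0
    rw [V_eq, show cc 2 = 0 from rfl]
    ring
  | succ κ ih =>
    intro p
    have hstep : Bop (omegaJ (κ+1)) p
        = Bop (fun q => Real.exp (q.2.2 1 0 - q.2.2 0 0) * Dx (omegaJ κ) q) p := rfl
    rw [hstep, Bop_expmul ((omega_rep κ).dx) p, Bop_Dx (omega_rep κ) p]
    have hz : Bop (omegaJ κ) = fun _ => (0:ℝ) := funext ih
    rw [hz, Dx_zero]
    ring

lemma Bop_comp_omegas (κ : ℕ) (g : (Fin (κ+1) → ℝ) → ℝ) (hg : ContDiff ℝ (⊤ : ℕ∞) g) (p : Jet) :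
    Bop (fun q => g (fun j : Fin (κ+1) => omegaJ j.1 q)) p = 0 := by
  have comp : ∀ (v : Jet) (d : Fin (κ+1) → ℝ), (∀ j, HGD (omegaJ j.1) p v (d j)) →
      HGD (fun q => g (fun j : Fin (κ+1) => omegaJ j.1 q)) p v
        (fderiv ℝ g (fun j : Fin (κ+1) => omegaJ j.1 p) d) := by
    intro v d hd
    have hcurve : HasDerivAt (fun s : ℝ => (fun j : Fin (κ+1) => omegaJ j.1 (p + s • v))) d 0 :=
      hasDerivAt_pi.2 hd
    have h0 : (fun j : Fin (κ+1) => omegaJ j.1 (p + (0:ℝ) • v))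
        = fun j : Fin (κ+1) => omegaJ j.1 p := by
      funext j; simp
    have hf : HasFDerivAt g (fderiv ℝ g (fun j : Fin (κ+1) => omegaJ j.1 p))
        (fun j : Fin (κ+1) => omegaJ j.1 (p + (0:ℝ) • v)) := by
      rw [h0]
      exact (hg.differentiable (by simp) _).hasFDerivAt
    exact hf.comp_hasDerivAt 0 hcurve
  have ht := comp (vt p) (fun j => Dt (omegaJ j.1) p) (fun j => (omega_rep j.1).hgdDt p)
  have hx := comp (vx p) (fun j => Dx (omegaJ j.1) p) (fun j => (omega_rep j.1).hgdDx p)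
  rw [Bop_eq_of_hgd ht hx, ← smul_eq_mul, ← map_smul, ← map_add]
  have hzero : ((fun j : Fin (κ+1) => Dt (omegaJ j.1) p)
      + (p.2.2 0 0 + p.2.2 1 0) • fun j : Fin (κ+1) => Dx (omegaJ j.1) p)
      = (0 : Fin (κ+1) → ℝ) := by
    funext j
    have hb := Bop_omega j.1 p
    unfold Bop at hb
    simpa [smul_eq_mul] using hb
  rw [hzero, map_zero]

/-! ### triangular structure of the ω's -/

abbrev DS (κ : ℕ) : Type := (Fin 2 → Fin (κ+1) → ℝ) × (Fin κ → ℝ)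

def zeta (κ : ℕ) (p : Jet) : DS κ :=
  (fun a j => p.2.2 a.castSucc j.1, fun j => p.2.2 2 j.1)

lemma zeta_affine (κ : ℕ) (p v : Jet) (s : ℝ) :
    zeta κ (p + s • v) = zeta κ p + s • zeta κ v := rfl

/-- generic directional-derivative lemma through an affine finite-dim projection -/
lemma hgd_through {D : Type*} [NormedAddCommGroup D] [NormedSpace ℝ D]
    (G : D → ℝ) (hG : ContDiff ℝ (⊤ : ℕ∞) G) (φ : Jet → D)
    (hφ : ∀ (p v : Jet) (s : ℝ), φ (p + s • v) = φ p + s • φ v) (p v : Jet) :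
    HGD (fun q => G (φ q)) p v (fderiv ℝ G (φ p) (φ v)) := by
  have hline : HasDerivAt (fun s : ℝ => φ p + s • φ v) (φ v) 0 := by
    simpa using ((hasDerivAt_id (0:ℝ)).smul_const (φ v)).const_add (φ p)
  have h0 : φ p + (0:ℝ) • φ v = φ p := by simp
  have hF : HasFDerivAt G (fderiv ℝ G (φ p)) (φ p + (0:ℝ) • φ v) := by
    rw [h0]; exact (hG.differentiable (by simp) (φ p)).hasFDerivAt
  have hcomp := hF.comp_hasDerivAt 0 hline
  unfold HGD
  have heq : (fun s : ℝ => G (φ (p + s • v))) = G ∘ fun s : ℝ => φ p + s • φ v := by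
    funext s; rw [Function.comp_apply, hφ]
  rw [heq]
  exact hcomp

lemma cd_DS1 (κ' : ℕ) (a : Fin 2) (j : Fin (κ'+1)) :
    ContDiff ℝ (⊤ : ℕ∞) (fun z : DS κ' => z.1 a j) :=
  ((ContinuousLinearMap.proj j : (Fin (κ'+1) → ℝ) →L[ℝ] ℝ).comp
    ((ContinuousLinearMap.proj a :
        (Fin 2 → Fin (κ'+1) → ℝ) →L[ℝ] (Fin (κ'+1) → ℝ)).comp
      (ContinuousLinearMap.fst ℝ (Fin 2 → Fin (κ'+1) → ℝ) (Fin κ' → ℝ)))).contDiff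

lemma cd_DS2 (κ' : ℕ) (j : Fin κ') :
    ContDiff ℝ (⊤ : ℕ∞) (fun z : DS κ' => z.2 j) :=
  ((ContinuousLinearMap.proj j : (Fin κ' → ℝ) →L[ℝ] ℝ).comp
    (ContinuousLinearMap.snd ℝ (Fin 2 → Fin (κ'+1) → ℝ) (Fin κ' → ℝ))).contDiff

def zb (κ : ℕ) (z : DS (κ+1)) : DS κ :=
  (fun a j => z.1 a ⟨j.1, by omega⟩, fun j => z.2 ⟨j.1, by omega⟩)

def zs (κ : ℕ) (z : DS (κ+1)) : DS κ :=
  (fun a j => z.1 a ⟨j.1+1, by omega⟩, fun j => z.2 ⟨j.1+1, by omega⟩)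

lemma contDiff_zb (κ : ℕ) : ContDiff ℝ (⊤ : ℕ∞) (zb κ) :=
  (contDiff_pi.2 fun a => contDiff_pi.2 fun j => cd_DS1 (κ+1) a _).prodMk
    (contDiff_pi.2 fun j => cd_DS2 (κ+1) _)

lemma contDiff_zs (κ : ℕ) : ContDiff ℝ (⊤ : ℕ∞) (zs κ) :=
  (contDiff_pi.2 fun a => contDiff_pi.2 fun j => cd_DS1 (κ+1) a _).prodMk
    (contDiff_pi.2 fun j => cd_DS2 (κ+1) _)

lemma zb_affine (κ : ℕ) (z w : DS (κ+1)) (s : ℝ) : True := trivial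

lemma zb_zeta (κ : ℕ) (p : Jet) : zb κ (zeta (κ+1) p) = zeta κ p := rfl
lemma zs_zeta (κ : ℕ) (p : Jet) : zs κ (zeta (κ+1) p) = zeta κ (vx p) := rfl

theorem omega_struct (κ : ℕ) : ∃ G : DS κ → ℝ, ContDiff ℝ (⊤ : ℕ∞) G ∧ ∀ p : Jet,
    omegaJ κ p = Real.exp (κ * (p.2.2 1 0 - p.2.2 0 0)) * p.2.2 2 κ + G (zeta κ p) := by
  induction κ with
  | zero =>
    refine ⟨fun _ => 0, contDiff_const, fun p => ?_⟩
    show p.2.2 2 0 = _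
    simp
  | succ κ ih =>
    obtain ⟨G, hG, hval⟩ := ih
    refine ⟨fun z => Real.exp (z.1 1 ⟨0, by omega⟩ - z.1 0 ⟨0, by omega⟩) *
        (Real.exp (κ * (z.1 1 ⟨0, by omega⟩ - z.1 0 ⟨0, by omega⟩))
            * ((κ:ℝ) * (z.1 1 ⟨1, by omega⟩ - z.1 0 ⟨1, by omega⟩)) * z.2 ⟨κ, by omega⟩
          + fderiv ℝ G (zb κ z) (zs κ z)), ?_, ?_⟩
    · apply ContDiff.mul
      · exact Real.contDiff_exp.comp ((cd_DS1 (κ+1) 1 _).sub (cd_DS1 (κ+1) 0 _))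
      · apply ContDiff.add
        · exact ((Real.contDiff_exp.comp ((contDiff_const.mul
              ((cd_DS1 (κ+1) 1 _).sub (cd_DS1 (κ+1) 0 _))))).mul
            (contDiff_const.mul ((cd_DS1 (κ+1) 1 _).sub (cd_DS1 (κ+1) 0 _)))).mul
            (cd_DS2 (κ+1) _)
        · exact ((hG.fderiv_right (by simp)).comp (contDiff_zb κ)).clm_apply (contDiff_zs κ)
    · intro p
      have hmain := ((((hgd_coord 1 0 p (vx p)).sub (hgd_coord 0 0 p (vx p))).const_mul
          (κ:ℝ)).exp.mul (hgd_coord 2 κ p (vx p))).add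
        (hgd_through G hG (zeta κ) (zeta_affine κ) p (vx p))
      have hω := hmain.congr_fun (fun q => hval q)
      have hDx : Dx (omegaJ κ) p
          = Real.exp (κ * (p.2.2 1 0 - p.2.2 0 0)) * ((κ:ℝ) * ((vx p).2.2 1 0 - (vx p).2.2 0 0))
              * p.2.2 2 κ
            + Real.exp (κ * (p.2.2 1 0 - p.2.2 0 0)) * (vx p).2.2 2 κ
            + fderiv ℝ G (zeta κ p) (zeta κ (vx p)) := by
        rw [Dx_eq_gd, hω.gd_eq]
      show Real.exp (p.2.2 1 0 - p.2.2 0 0) * Dx (omegaJ κ) p = _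
      rw [hDx]
      have e1 : (vx p).2.2 1 0 = p.2.2 1 1 := rfl
      have e2 : (vx p).2.2 0 0 = p.2.2 0 1 := rfl
      have e3 : (vx p).2.2 2 κ = p.2.2 2 (κ+1) := rfl
      rw [e1, e2, e3]
      show _ = Real.exp ((↑(κ + 1) : ℝ) * (p.2.2 1 0 - p.2.2 0 0)) * p.2.2 2 (κ+1)
          + Real.exp (p.2.2 1 0 - p.2.2 0 0) *
            (Real.exp ((κ:ℝ) * (p.2.2 1 0 - p.2.2 0 0)) * ((κ:ℝ) * (p.2.2 1 1 - p.2.2 0 1))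
                * p.2.2 2 κ
              + fderiv ℝ G (zeta κ p) (zeta κ (vx p)))
      have hexp : Real.exp ((↑(κ+1) : ℝ) * (p.2.2 1 0 - p.2.2 0 0))
          = Real.exp (p.2.2 1 0 - p.2.2 0 0) * Real.exp ((κ:ℝ) * (p.2.2 1 0 - p.2.2 0 0)) := by
        rw [← Real.exp_add]; congr 1; push_cast; ring
      rw [hexp]
      ring

/-! ### the triangular inverse -/

def GS (κ : ℕ) : DS κ → ℝ := (omega_struct κ).choose

lemma GS_smooth (κ : ℕ) : ContDiff ℝ (⊤ : ℕ∞) (GS κ) := (omega_struct κ).choose_spec.1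

lemma GS_spec (κ : ℕ) (p : Jet) :
    omegaJ κ p = Real.exp (κ * (p.2.2 1 0 - p.2.2 0 0)) * p.2.2 2 κ + GS κ (zeta κ p) :=
  (omega_struct κ).choose_spec.2 p

def invR (ρ : Fin 3 → ℕ → ℝ) (y : ℕ → ℝ) : ℕ → ℝ
  | κ => Real.exp (-(κ * (ρ 1 0 - ρ 0 0))) *
      (y κ - GS κ (fun a j => ρ a.castSucc j.1, fun j : Fin κ => invR ρ y j.1))
  decreasing_by exact j.2

lemma invR_def (ρ : Fin 3 → ℕ → ℝ) (y : ℕ → ℝ) (κ : ℕ) :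
    invR ρ y κ = Real.exp (-(κ * (ρ 1 0 - ρ 0 0))) *
      (y κ - GS κ (fun a j => ρ a.castSucc j.1, fun j : Fin κ => invR ρ y j.1)) := by
  rw [invR]

lemma castSucc_ne_two (a : Fin 2) : (a.castSucc : Fin 3) ≠ 2 := by
  intro h
  have hv : (a.castSucc : Fin 3).1 = (2 : Fin 3).1 := congrArg Fin.val h
  have h1 : (a.castSucc : Fin 3).1 = a.1 := rfl
  have h2 : (2 : Fin 3).1 = 2 := rfl
  have := a.isLt
  omega

/-- the inverse property: points built with `invR` have prescribed ω's -/
lemma omega_invR (t x : ℝ) (ρ : Fin 3 → ℕ → ℝ) (y : ℕ → ℝ) (κ : ℕ) :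
    omegaJ κ ((t, x, fun i m => if i = 2 then invR ρ y m else ρ i m) : Jet) = y κ := by
  set p : Jet := (t, x, fun i m => if i = 2 then invR ρ y m else ρ i m) with hp
  have h1 : p.2.2 1 0 = ρ 1 0 := by
    rw [hp]
    show (if (1 : Fin 3) = 2 then invR ρ y 0 else ρ 1 0) = ρ 1 0
    exact if_neg (by decide)
  have h0 : p.2.2 0 0 = ρ 0 0 := by
    rw [hp]
    show (if (0 : Fin 3) = 2 then invR ρ y 0 else ρ 0 0) = ρ 0 0
    exact if_neg (by decide)
  have h2 : ∀ m, p.2.2 2 m = invR ρ y m := by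
    intro m; rw [hp]
    show (if (2 : Fin 3) = 2 then invR ρ y m else ρ 2 m) = invR ρ y m
    exact if_pos rfl
  have hzeta : zeta κ p = (fun a j => ρ a.castSucc j.1, fun j : Fin κ => invR ρ y j.1) := by
    rw [hp]
    refine Prod.ext ?_ ?_
    · funext a j
      show (if (a.castSucc : Fin 3) = 2 then invR ρ y j.1 else ρ a.castSucc j.1)
          = ρ a.castSucc j.1
      exact if_neg (castSucc_ne_two a)
    · funext j
      show (if (2 : Fin 3) = 2 then invR ρ y j.1 else ρ 2 j.1) = invR ρ y j.1
      exact if_pos rfl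
  rw [GS_spec κ p, h1, h0, h2, hzeta, invR_def]
  rw [← mul_assoc, ← Real.exp_add]
  simp

/-- uniqueness of the triangular inverse -/
lemma invR_eq (p : Jet) (ρ : Fin 3 → ℕ → ℝ) (y : ℕ → ℝ) (κ : ℕ)
    (hρ : ∀ (a : Fin 2) (m : ℕ), m ≤ κ → ρ a.castSucc m = p.2.2 a.castSucc m)
    (hy : ∀ m ≤ κ, y m = omegaJ m p) :
    invR ρ y κ = p.2.2 2 κ := by
  induction κ using Nat.strong_induction_on with
  | _ κ ih =>
    rw [invR_def]
    have hz : ((fun a j => ρ a.castSucc j.1, fun j : Fin κ => invR ρ y j.1) : DS κ)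
        = zeta κ p := by
      refine Prod.ext ?_ ?_
      · funext a j
        exact hρ a j.1 (by omega)
      · funext j
        exact ih j.1 j.2 (fun a m hm => hρ a m (by omega)) (fun m hm => hy m (by omega))
    rw [hz, hy κ le_rfl, GS_spec κ p]
    have h1 : ρ 1 0 = p.2.2 1 0 := hρ 1 0 (by omega)
    have h0 : ρ 0 0 = p.2.2 0 0 := hρ 0 0 (by omega)
    rw [h1, h0]
    rw [add_sub_cancel_right, ← mul_assoc, ← Real.exp_add]
    simp

/-- smoothness of the inverse in the finite-dimensional parameters -/
lemma contDiff_invR (n : ℕ) : ∀ κ, κ ≤ n →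
    ContDiff ℝ (⊤ : ℕ∞) (fun z : E n => invR (extE z) (extE z 2) κ) := by
  intro κ
  induction κ using Nat.strong_induction_on with
  | _ κ ih =>
    intro hκ
    have heq : (fun z : E n => invR (extE z) (extE z 2) κ)
        = fun z : E n => Real.exp (-(κ * (extE z 1 0 - extE z 0 0))) *
            (extE z 2 κ - GS κ (fun a j => extE z a.castSucc j.1,
              fun j : Fin κ => invR (extE z) (extE z 2) j.1)) := by
      funext z; rw [invR_def]
    rw [heq]
    apply ContDiff.mul
    · exact Real.contDiff_exp.comp (((contDiff_const.mul
        ((contDiff_extE n 1 0).sub (contDiff_extE n 0 0)))).neg)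
    · apply ContDiff.sub
      · exact contDiff_extE n 2 κ
      · apply (GS_smooth κ).comp
        apply ContDiff.prodMk
        · exact contDiff_pi.2 fun a => contDiff_pi.2 fun j => contDiff_extE n _ _
        · exact contDiff_pi.2 fun j => ih j.1 j.2 (by omega)

/-! ### coefficient functions and their variations -/

def AA (i : Fin 3) (κ : ℕ) (ρ : Fin 3 → ℕ → ℝ) : ℝ :=
  (ρ 0 0 + ρ 1 0) * ρ i (κ+1) - KPa i κ ρ

lemma KPa_rows {i : Fin 3} {κ : ℕ} {ρ ρ' : Fin 3 → ℕ → ℝ}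
    (h0 : ρ 0 = ρ' 0) (h1 : ρ 1 = ρ' 1) (hi : ρ i = ρ' i) : KPa i κ ρ = KPa i κ ρ' := by
  unfold KPa VD
  rw [h0, h1, hi]

lemma AA_rows {i : Fin 3} {κ : ℕ} {ρ ρ' : Fin 3 → ℕ → ℝ}
    (h0 : ρ 0 = ρ' 0) (h1 : ρ 1 = ρ' 1) (hi : ρ i = ρ' i) : AA i κ ρ = AA i κ ρ' := by
  unfold AA
  rw [KPa_rows h0 h1 hi, h0, h1, hi]

def bump (ρ : Fin 3 → ℕ → ℝ) (a : Fin 3) (l : ℕ) (s : ℝ) : Fin 3 → ℕ → ℝ :=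
  fun b m => if b = a ∧ m = l then ρ b m + s else ρ b m

lemma bump_ne {ρ a l s} {b : Fin 3} {m : ℕ} (h : m ≠ l) : bump ρ a l s b m = ρ b m :=
  if_neg (by tauto)

lemma bump_ne' {ρ a l s} {b : Fin 3} {m : ℕ} (h : ¬(b = a ∧ m = l)) : bump ρ a l s b m = ρ b m :=
  if_neg h

lemma bump_eq {ρ a l s} : bump ρ a l s a l = ρ a l + s := if_pos ⟨rfl, rfl⟩

lemma VD_bump {ρ a l s} (i : Fin 3) (j : ℕ) (hj : j ≠ l) :
    VD i j (bump ρ a l s) = VD i j ρ := by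
  unfold VD
  rw [bump_ne hj, bump_ne hj]

lemma hVD0 (i : Fin 3) (ρ : Fin 3 → ℕ → ℝ) : VD i 0 ρ = ρ 0 0 + ρ 1 0 + cc i := by
  unfold VD; simp

lemma KPa_bump {ρ : Fin 3 → ℕ → ℝ} {a : Fin 3} {l : ℕ} {s : ℝ} (hl : 1 ≤ l)
    (i : Fin 3) (κ : ℕ) (hκ : κ + 1 ≤ l) :
    KPa i κ (bump ρ a l s) = KPa i κ ρ + (if i = a ∧ κ + 1 = l then VD i 0 ρ * s else 0) := by
  by_cases hP : i = a ∧ κ + 1 = l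
  · rw [if_pos hP]
    unfold KPa
    rw [Finset.sum_range_succ' _ κ, Finset.sum_range_succ' _ κ]
    have h1 : ∀ j ∈ Finset.range κ,
        (κ.choose (j+1) : ℝ) * VD i (j+1) (bump ρ a l s) * bump ρ a l s i (κ+1-(j+1))
        = (κ.choose (j+1) : ℝ) * VD i (j+1) ρ * ρ i (κ+1-(j+1)) := by
      intro j hj
      have hjr : j < κ := Finset.mem_range.1 hj
      rw [VD_bump i (j+1) (by omega), bump_ne (by omega)]
    rw [Finset.sum_congr rfl h1]
    have h2 : bump ρ a l s i (κ+1-0) = ρ i (κ+1) + s := by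
      have : κ + 1 - 0 = κ + 1 := rfl
      rw [this, hP.1, ← hP.2, bump_eq]
    rw [h2, VD_bump i 0 (by omega)]
    push_cast [Nat.choose_zero_right]
    ring
  · rw [if_neg hP, add_zero]
    unfold KPa
    refine Finset.sum_congr rfl fun j hj => ?_
    have hjr : j ≤ κ := by simpa [Nat.lt_succ_iff] using hj
    rcases Nat.eq_zero_or_pos j with hj0 | hjpos
    · subst hj0
      rw [VD_bump i 0 (by omega), bump_ne' (m := κ+1-0)
        (by intro hcon; refine hP ⟨hcon.1, ?_⟩; have := hcon.2; omega)]
    · rw [VD_bump i j (by omega), bump_ne (by omega)]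

lemma AA_bump {ρ : Fin 3 → ℕ → ℝ} {a : Fin 3} {l : ℕ} {s : ℝ} (hl : 1 ≤ l)
    (i : Fin 3) (κ : ℕ) (hκ : κ + 1 ≤ l) :
    AA i κ (bump ρ a l s) = AA i κ ρ - (if i = a ∧ κ + 1 = l then cc i * s else 0) := by
  unfold AA
  rw [KPa_bump hl i κ hκ, bump_ne (by omega : (0:ℕ) ≠ l), bump_ne (by omega : (0:ℕ) ≠ l)]
  by_cases hP : i = a ∧ κ + 1 = l
  · rw [if_pos hP, if_pos hP]
    have h2 : bump ρ a l s i (κ+1) = ρ i (κ+1) + s := by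
      rw [hP.1, ← hP.2, bump_eq]
    rw [h2, hVD0]
    ring
  · rw [if_neg hP, if_neg hP]
    rw [bump_ne' (by intro hcon; exact hP ⟨hcon.1, by omega⟩)]
    ring

lemma KPa_bump0 {ρ : Fin 3 → ℕ → ℝ} {s : ℝ} (i : Fin 3) (κ : ℕ) :
    KPa i κ (bump ρ 0 0 s) = KPa i κ ρ + s * ρ i (κ+1) := by
  unfold KPa
  rw [Finset.sum_range_succ' _ κ, Finset.sum_range_succ' _ κ]
  have h1 : ∀ j ∈ Finset.range κ,
      (κ.choose (j+1) : ℝ) * VD i (j+1) (bump ρ 0 0 s) * bump ρ 0 0 s i (κ+1-(j+1))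
      = (κ.choose (j+1) : ℝ) * VD i (j+1) ρ * ρ i (κ+1-(j+1)) := by
    intro j hj
    have hjr : j < κ := Finset.mem_range.1 hj
    rw [VD_bump i (j+1) (by omega), bump_ne (by omega)]
  rw [Finset.sum_congr rfl h1]
  have h2 : VD i 0 (bump ρ 0 0 s) = VD i 0 ρ + s := by
    unfold VD
    rw [show bump ρ 0 0 s 0 0 = ρ 0 0 + s from bump_eq,
      bump_ne' (by intro hcon; exact absurd hcon.1 (by decide))]
    ring
  rw [h2, bump_ne (by omega : κ + 1 - 0 ≠ 0)]
  push_cast [Nat.choose_zero_right]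
  ring

lemma AA_bump0 {ρ : Fin 3 → ℕ → ℝ} {s : ℝ} (i : Fin 3) (κ : ℕ) :
    AA i κ (bump ρ 0 0 s) = AA i κ ρ := by
  unfold AA
  rw [KPa_bump0 i κ,
    show bump ρ 0 0 s 0 0 = ρ 0 0 + s from bump_eq,
    bump_ne' (by intro hcon; exact absurd hcon.1 (by decide)),
    bump_ne (by omega : κ + 1 ≠ 0)]
  ring

lemma c_bump0 {ρ : Fin 3 → ℕ → ℝ} {s : ℝ} :
    bump ρ 0 0 s 0 0 + bump ρ 0 0 s 1 0 = ρ 0 0 + ρ 1 0 + s := by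
  rw [show bump ρ 0 0 s 0 0 = ρ 0 0 + s from bump_eq,
    bump_ne' (by intro hcon; exact absurd hcon.1 (by decide))]
  ring

/-! ### decomposition and translation on `E n` -/

def eJv (n : ℕ) (i : Fin 3) (m : Fin (n+1)) : E n := (0, 0, Pi.single i (Pi.single m 1))

lemma clm_decomp (n : ℕ) (L : E n →L[ℝ] ℝ) (u : E n) :
    L u = u.1 * L (((1:ℝ), (0:ℝ), 0) : E n) + u.2.1 * L (((0:ℝ), (1:ℝ), 0) : E n)
      + ∑ x : Fin 3 × Fin (n+1), u.2.2 x.1 x.2 * L (eJv n x.1 x.2) := by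
  have hsum3 : (∑ x : Fin 3 × Fin (n+1), u.2.2 x.1 x.2 • eJv n x.1 x.2)
      = (((0:ℝ), (0:ℝ), u.2.2) : E n) := by
    refine Prod.ext ?_ (Prod.ext ?_ ?_)
    · rw [Prod.fst_sum]; simp [eJv]
    · rw [Prod.snd_sum, Prod.fst_sum]; simp [eJv]
    · rw [Prod.snd_sum, Prod.snd_sum]
      funext a b
      rw [Finset.sum_apply, Finset.sum_apply]
      rw [Finset.sum_eq_single_of_mem (a, b) (Finset.mem_univ _)]
      · simp [eJv]
      · intro x _ hx
        have hne : ¬(a = x.1) ∨ ¬(b = x.2) := by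
          by_contra hcon
          push_neg at hcon
          exact hx (Prod.ext hcon.1.symm hcon.2.symm)
        rcases hne with hne | hne
        · simp [eJv, Pi.single_apply, hne]
        · have hrw : (u.2.2 x.1 x.2 • eJv n x.1 x.2).2.2 a b
              = u.2.2 x.1 x.2 *
                ((Pi.single x.1 (Pi.single x.2 (1:ℝ)) : Fin 3 → Fin (n+1) → ℝ) a b) := rfl
          rw [hrw, Pi.single_apply]
          split
          · rw [Pi.single_apply, if_neg hne, mul_zero]
          · simp
  have hu : u = u.1 • (((1:ℝ), (0:ℝ), 0) : E n) + u.2.1 • (((0:ℝ), (1:ℝ), 0) : E n)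
      + ∑ x : Fin 3 × Fin (n+1), u.2.2 x.1 x.2 • eJv n x.1 x.2 := by
    rw [hsum3]
    refine Prod.ext ?_ (Prod.ext ?_ ?_) <;> simp
  conv_lhs => rw [hu]
  rw [map_add, map_add, map_smul, map_smul, map_sum]
  simp only [smul_eq_mul]
  congr 1
  exact Finset.sum_congr rfl fun x _ => by rw [map_smul, smul_eq_mul]

lemma fderiv_translate {n : ℕ} {h : E n → ℝ} (hd : ContDiff ℝ (⊤ : ℕ∞) h) {e : E n}
    (hz : ∀ z, fderiv ℝ h z e = 0) :
    (∀ (z : E n) (c : ℝ), h (z + c • e) = h z) ∧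
      (∀ (z : E n) (c : ℝ), fderiv ℝ h (z + c • e) = fderiv ℝ h z) := by
  have hval : ∀ (z : E n) (c : ℝ), h (z + c • e) = h z := by
    intro z c
    have hdiff : Differentiable ℝ (fun s : ℝ => h (z + s • e)) := by
      intro s
      have hline : HasDerivAt (fun s : ℝ => z + s • e) e s := by
        simpa using ((hasDerivAt_id s).smul_const e).const_add z
      exact ((hd.differentiable (by simp) _).hasFDerivAt.comp_hasDerivAt s hline).differentiableAt
    have hdz : ∀ s : ℝ, deriv (fun s : ℝ => h (z + s • e)) s = 0 := by
      intro s
      have hline : HasDerivAt (fun s : ℝ => z + s • e) e s := by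
        simpa using ((hasDerivAt_id s).smul_const e).const_add z
      have := (hd.differentiable (by simp) _).hasFDerivAt.comp_hasDerivAt s hline
      rw [show (fun s : ℝ => h (z + s • e)) = h ∘ (fun s : ℝ => z + s • e) from rfl,
        this.deriv, hz]
    have := is_const_of_deriv_eq_zero hdiff hdz c 0
    simpa using this
  refine ⟨hval, fun z c => ?_⟩
  have hfun : (fun w => h (w + c • e)) = h := funext fun w => hval w c
  have ht : HasFDerivAt (fun w : E n => w + c • e) (ContinuousLinearMap.id ℝ (E n)) z :=
    (hasFDerivAt_id z).add_const (c • e)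
  have hcomp := (hd.differentiable (by simp) (z + c • e)).hasFDerivAt.comp z ht
  rw [ContinuousLinearMap.comp_id] at hcomp
  calc fderiv ℝ h (z + c • e) = fderiv ℝ (fun w => h (w + c • e)) z := hcomp.fderiv.symm
    _ = fderiv ℝ h z := by rw [hfun]

/-! ### the forward direction: change of coordinates -/

def zee (n : ℕ) (t x : ℝ) (ρ : Fin 3 → ℕ → ℝ) (y : ℕ → ℝ) : E n :=
  (t, x, fun i m => if i = 2 then y m.1 else ρ i m.1)

def PzD (n : ℕ) (z : E n) : Jet :=
  (z.1, z.2.1, fun i m => if i = 2 then invR (extE z) (extE z 2) m else extE z i m)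

def hD (n : ℕ) (f : Jet → ℝ) (z : E n) : ℝ := f (PzD n z)

def ZpD (n : ℕ) (p : Jet) : E n :=
  (p.1, p.2.1, fun i m => if i = 2 then omegaJ m.1 p else p.2.2 i m)

lemma hD_smooth {n : ℕ} {f : Jet → ℝ} {F : E n → ℝ} (hrep : Rep n f F) :
    ContDiff ℝ (⊤ : ℕ∞) (hD n f) := by
  have heq : hD n f = fun z => F (pr n (PzD n z)) := funext fun z => hrep.2 (PzD n z)
  rw [heq]
  apply hrep.1.comp
  refine contDiff_fst.prodMk ((contDiff_fst.comp contDiff_snd).prodMk ?_)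
  refine contDiff_pi.2 fun i => contDiff_pi.2 fun m => ?_
  by_cases hi : i = 2
  · have h1 : (fun z : E n => (PzD n z).2.2 i m.1)
        = fun z : E n => invR (extE z) (extE z 2) m.1 := by
      funext z
      show (if i = 2 then invR (extE z) (extE z 2) m.1 else extE z i m.1) = _
      rw [if_pos hi]
    rw [h1]
    exact contDiff_invR n m.1 (by omega)
  · have h1 : (fun z : E n => (PzD n z).2.2 i m.1) = fun z : E n => extE z i m.1 := by
      funext z
      show (if i = 2 then invR (extE z) (extE z 2) m.1 else extE z i m.1) = _
      rw [if_neg hi]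
    rw [h1]
    exact contDiff_extE n i m.1

lemma f_eq_hZp {n : ℕ} {f : Jet → ℝ} {F : E n → ℝ} (hrep : Rep n f F) (p : Jet) :
    f p = hD n f (ZpD n p) := by
  show f p = f (PzD n (ZpD n p))
  rw [hrep.2, hrep.2]
  congr 1
  refine Prod.ext rfl (Prod.ext rfl ?_)
  funext i m
  show p.2.2 i m.1
      = (if i = 2 then invR (extE (ZpD n p)) (extE (ZpD n p) 2) m.1 else extE (ZpD n p) i m.1)
  by_cases hi : i = 2
  · rw [if_pos hi, invR_eq p]
    · rw [hi]
    · intro a mm hmm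
      have hlt : mm < n + 1 := by omega
      show (if h : mm < n+1 then (ZpD n p).2.2 a.castSucc ⟨mm, h⟩ else 0) = _
      rw [dif_pos hlt]
      show (if (a.castSucc : Fin 3) = 2 then omegaJ mm p else p.2.2 a.castSucc mm) = _
      rw [if_neg (castSucc_ne_two a)]
    · intro mm hmm
      have hlt : mm < n + 1 := by omega
      show (if h : mm < n+1 then (ZpD n p).2.2 2 ⟨mm, h⟩ else 0) = _
      rw [dif_pos hlt]
      show (if (2 : Fin 3) = 2 then omegaJ mm p else p.2.2 2 mm) = _
      rw [if_pos rfl]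
  · rw [if_neg hi]
    show _ = (if h : m.1 < n+1 then (ZpD n p).2.2 i ⟨m.1, h⟩ else 0)
    rw [dif_pos m.isLt]
    show _ = (if i = 2 then omegaJ m.1 p else p.2.2 i m.1)
    rw [if_neg hi]

lemma key_identity {n : ℕ} {f : Jet → ℝ} {F : E n → ℝ} (hrep : Rep n f F)
    (hB : ∀ p : Jet, Bop f p = 0) (p : Jet) :
    fderiv ℝ (hD n f) (ZpD n p)
      (((1 : ℝ), p.2.2 0 0 + p.2.2 1 0,
        fun i (m : Fin (n+1)) => if i = 2 then 0 else AA i m.1 p.2.2) : E n) = 0 := by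
  have hsm := hD_smooth hrep
  have chain : ∀ (v : Jet) (dω : Fin (n+1) → ℝ),
      (∀ m : Fin (n+1), HGD (omegaJ m.1) p v (dω m)) →
      HGD f p v (fderiv ℝ (hD n f) (ZpD n p)
        ((v.1, v.2.1, fun i (m : Fin (n+1)) => if i = 2 then dω m else v.2.2 i m.1) : E n)) := by
    intro v dω hdω
    have hcomp : ∀ (i : Fin 3) (m : Fin (n+1)), HasDerivAt
        (fun s : ℝ => (ZpD n (p + s • v)).2.2 i m)
        (if i = 2 then dω m else v.2.2 i m.1) 0 := by
      intro i m
      by_cases hi : i = 2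
      · have hfun : (fun s : ℝ => (ZpD n (p + s • v)).2.2 i m)
            = fun s : ℝ => omegaJ m.1 (p + s • v) := by
          funext s
          show (if i = 2 then omegaJ m.1 (p + s • v) else (p + s • v).2.2 i m.1) = _
          rw [if_pos hi]
        rw [hfun, if_pos hi]
        exact hdω m
      · have hfun : (fun s : ℝ => (ZpD n (p + s • v)).2.2 i m)
            = fun s : ℝ => (p + s • v).2.2 i m.1 := by
          funext s
          show (if i = 2 then omegaJ m.1 (p + s • v) else (p + s • v).2.2 i m.1) = _
          rw [if_neg hi]
        rw [hfun, if_neg hi]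
        exact hgd_coord i m.1 p v
    have hcurve : HasDerivAt (fun s : ℝ => ZpD n (p + s • v))
        ((v.1, v.2.1, fun i (m : Fin (n+1)) => if i = 2 then dω m else v.2.2 i m.1) : E n) 0 := by
      refine HasDerivAt.prodMk ?_ (HasDerivAt.prodMk ?_ ?_)
      · exact hgd_t p v
      · exact hgd_x p v
      · exact hasDerivAt_pi.2 fun i => hasDerivAt_pi.2 fun m => hcomp i m
    have h0 : ZpD n (p + (0:ℝ) • v) = ZpD n p := by rw [zero_smul, add_zero]
    have hf : HasFDerivAt (hD n f) (fderiv ℝ (hD n f) (ZpD n p)) (ZpD n (p + (0:ℝ) • v)) := by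
      rw [h0]; exact (hsm.differentiable (by simp) _).hasFDerivAt
    have hchain := hf.comp_hasDerivAt 0 hcurve
    have hfeq : (fun s : ℝ => f (p + s • v)) = (hD n f) ∘ fun s : ℝ => ZpD n (p + s • v) := by
      funext s; exact f_eq_hZp hrep (p + s • v)
    unfold HGD
    rw [hfeq]
    exact hchain
  have Ht := chain (vt p) (fun m => Dt (omegaJ m.1) p) (fun m => (omega_rep m.1).hgdDt p)
  have Hx := chain (vx p) (fun m => Dx (omegaJ m.1) p) (fun m => (omega_rep m.1).hgdDx p)
  have hBp := hB p
  rw [Bop_eq_of_hgd Ht Hx] at hBp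
  rw [← smul_eq_mul, ← map_smul, ← map_add] at hBp
  have hvec : (((vt p).1, (vt p).2.1, fun i (m : Fin (n+1)) =>
        if i = 2 then Dt (omegaJ m.1) p else (vt p).2.2 i m.1) : E n)
      + (p.2.2 0 0 + p.2.2 1 0) • (((vx p).1, (vx p).2.1, fun i (m : Fin (n+1)) =>
        if i = 2 then Dx (omegaJ m.1) p else (vx p).2.2 i m.1) : E n)
      = (((1:ℝ), p.2.2 0 0 + p.2.2 1 0,
          fun i (m : Fin (n+1)) => if i = 2 then 0 else AA i m.1 p.2.2) : E n) := by
    refine Prod.ext ?_ (Prod.ext ?_ ?_)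
    · show (1:ℝ) + (p.2.2 0 0 + p.2.2 1 0) * 0 = 1
      ring
    · show (0:ℝ) + (p.2.2 0 0 + p.2.2 1 0) * 1 = p.2.2 0 0 + p.2.2 1 0
      ring
    · funext i m
      show (if i = 2 then Dt (omegaJ m.1) p else (vt p).2.2 i m.1)
          + (p.2.2 0 0 + p.2.2 1 0) * (if i = 2 then Dx (omegaJ m.1) p else (vx p).2.2 i m.1)
          = (if i = 2 then 0 else AA i m.1 p.2.2)
      by_cases hi : i = 2
      · rw [if_pos hi, if_pos hi, if_pos hi]
        have hbo := Bop_omega m.1 p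
        unfold Bop at hbo
        exact hbo
      · rw [if_neg hi, if_neg hi, if_neg hi]
        show -(K i m.1 p) + (p.2.2 0 0 + p.2.2 1 0) * p.2.2 i (m.1+1) = AA i m.1 p.2.2
        rw [K_eq]
        unfold AA
        ring
  rw [hvec] at hBp
  exact hBp

lemma key_inst {n : ℕ} {f : Jet → ℝ} {F : E n → ℝ} (hrep : Rep n f F)
    (hB : ∀ p : Jet, Bop f p = 0) (t x : ℝ) (ρ : Fin 3 → ℕ → ℝ) (y : ℕ → ℝ) :
    fderiv ℝ (hD n f) (zee n t x ρ y)
      (((1:ℝ), ρ 0 0 + ρ 1 0,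
        fun i (m : Fin (n+1)) => if i = 2 then 0 else AA i m.1 ρ) : E n) = 0 := by
  set p : Jet := (t, x, fun i mm => if i = 2 then invR ρ y mm else ρ i mm) with hp
  have hrow : ∀ i : Fin 3, i ≠ 2 → p.2.2 i = ρ i := by
    intro i hi
    rw [hp]
    funext mm
    show (if i = 2 then invR ρ y mm else ρ i mm) = ρ i mm
    exact if_neg hi
  have h0 := hrow 0 (by decide)
  have h1 := hrow 1 (by decide)
  have hZ : ZpD n p = zee n t x ρ y := by
    refine Prod.ext rfl (Prod.ext rfl ?_)
    funext i m
    show (if i = 2 then omegaJ m.1 p else p.2.2 i m.1) = (if i = 2 then y m.1 else ρ i m.1)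
    by_cases hi : i = 2
    · rw [if_pos hi, if_pos hi, hp]
      exact omega_invR t x ρ y m.1
    · rw [if_neg hi, if_neg hi, hrow i hi]
  have hkey := key_identity hrep hB p
  rw [hZ] at hkey
  have hvv : (((1:ℝ), p.2.2 0 0 + p.2.2 1 0,
        fun i (m : Fin (n+1)) => if i = 2 then 0 else AA i m.1 p.2.2) : E n)
      = (((1:ℝ), ρ 0 0 + ρ 1 0,
        fun i (m : Fin (n+1)) => if i = 2 then 0 else AA i m.1 ρ) : E n) := by
    refine Prod.ext rfl (Prod.ext ?_ ?_)
    · show p.2.2 0 0 + p.2.2 1 0 = ρ 0 0 + ρ 1 0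
      rw [h0, h1]
    · funext i m
      show (if i = 2 then (0:ℝ) else AA i m.1 p.2.2) = (if i = 2 then 0 else AA i m.1 ρ)
      by_cases hi : i = 2
      · rw [if_pos hi, if_pos hi]
      · rw [if_neg hi, if_neg hi, AA_rows h0 h1 (hrow i hi)]
  rw [hvv] at hkey
  exact hkey

lemma extE_app {n : ℕ} (z : E n) (i : Fin 3) (m : Fin (n+1)) : extE z i m.1 = z.2.2 i m := by
  show (if h : m.1 < n+1 then z.2.2 i ⟨m.1, h⟩ else 0) = z.2.2 i m
  rw [dif_pos m.isLt]

lemma zee_extE {n : ℕ} (z : E n) : zee n z.1 z.2.1 (extE z) (extE z 2) = z := by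
  refine Prod.ext rfl (Prod.ext rfl ?_)
  funext i m
  show (if i = 2 then extE z 2 m.1 else extE z i m.1) = z.2.2 i m
  by_cases hi : i = 2
  · subst hi
    rw [if_pos rfl]
    exact extE_app z 2 m
  · rw [if_neg hi]
    exact extE_app z i m

lemma zee_bump {n : ℕ} (t x : ℝ) (ρ : Fin 3 → ℕ → ℝ) (y : ℕ → ℝ) (a : Fin 3) (ha : a ≠ 2)
    (l : ℕ) (s : ℝ) :
    zee n t x (bump ρ a l s) y
      = zee n t x ρ y + s • (if hl : l ≤ n then eJv n a ⟨l, by omega⟩ else 0) := by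
  by_cases hl : l ≤ n
  · rw [dif_pos hl]
    refine Prod.ext ?_ (Prod.ext ?_ ?_)
    · show t = t + s * 0
      ring
    · show x = x + s * 0
      ring
    · funext i m
      show (if i = 2 then y m.1 else bump ρ a l s i m.1)
          = (if i = 2 then y m.1 else ρ i m.1)
            + s * ((Pi.single a (Pi.single (⟨l, by omega⟩ : Fin (n+1)) (1:ℝ))
                : Fin 3 → Fin (n+1) → ℝ) i m)
      rw [Pi.single_apply]
      by_cases hi : i = 2
      · rw [if_pos hi, if_pos hi, if_neg (by rw [hi]; exact fun hcon => ha hcon.symm)]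
        show y m.1 = y m.1 + s * ((0 : Fin (n+1) → ℝ) m)
        simp
      · rw [if_neg hi, if_neg hi]
        by_cases hia : i = a
        · rw [if_pos hia, Pi.single_apply]
          by_cases hml : m = (⟨l, by omega⟩ : Fin (n+1))
          · rw [if_pos hml]
            have hm1 : m.1 = l := by rw [hml]
            have : bump ρ a l s i m.1 = ρ i m.1 + s := by
              rw [show bump ρ a l s i m.1 = bump ρ a l s a l by rw [hia, hm1], bump_eq,
                hia, hm1]
            rw [this]
            ring
          · have hml' : m.1 ≠ l := fun hcon => hml (Fin.ext hcon)
            rw [if_neg hml, bump_ne hml']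
            ring
        · rw [if_neg hia, bump_ne' (fun hcon => hia hcon.1)]
          show ρ i m.1 = ρ i m.1 + s * ((0 : Fin (n+1) → ℝ) m)
          simp
  · rw [dif_neg hl, smul_zero, add_zero]
    refine Prod.ext rfl (Prod.ext rfl ?_)
    funext i m
    show (if i = 2 then y m.1 else bump ρ a l s i m.1) = (if i = 2 then y m.1 else ρ i m.1)
    by_cases hi : i = 2
    · rw [if_pos hi, if_pos hi]
    · rw [if_neg hi, if_neg hi, bump_ne (by have := m.isLt; omega)]

lemma cc_ne_zero {a : Fin 3} (ha : a ≠ 2) : cc a ≠ 0 := by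
  fin_cases a
  · show cc 0 ≠ 0
    rw [show cc 0 = 1 from rfl]
    norm_num
  · show cc 1 ≠ 0
    rw [show cc 1 = -1 from rfl]
    norm_num
  · exact absurd rfl ha

lemma dead_core {n : ℕ} {f : Jet → ℝ} {F : E n → ℝ} (hrep : Rep n f F)
    (hB : ∀ p : Jet, Bop f p = 0) (m : ℕ) (hm : m ≤ n)
    (IH : ∀ (b : Fin 3), b ≠ 2 → ∀ m' : Fin (n+1), m < m'.1 →
      ∀ z : E n, fderiv ℝ (hD n f) z (eJv n b m') = 0)
    (a : Fin 3) (ha : a ≠ 2) (mF : Fin (n+1)) (hmF : mF.1 = m) (z : E n) :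
    fderiv ℝ (hD n f) z (eJv n a mF) = 0 := by
  have hsm := hD_smooth hrep
  have J1 := key_inst hrep hB z.1 z.2.1 (extE z) (extE z 2)
  have J2 := key_inst hrep hB z.1 z.2.1 (bump (extE z) a (m+1) 1) (extE z 2)
  rw [zee_extE] at J1
  rw [zee_bump z.1 z.2.1 (extE z) (extE z 2) a ha (m+1) 1, zee_extE] at J2
  have hder : fderiv ℝ (hD n f)
      (z + (1:ℝ) • (if hl : m+1 ≤ n then eJv n a ⟨m+1, by omega⟩ else 0))
      = fderiv ℝ (hD n f) z := by
    by_cases hl : m + 1 ≤ n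
    · rw [dif_pos hl]
      exact (fderiv_translate hsm (fun z' => IH a ha ⟨m+1, by omega⟩ (by simp) z')).2 z 1
    · rw [dif_neg hl, smul_zero, add_zero]
  rw [hder] at J2
  have hc : bump (extE z) a (m+1) 1 0 0 + bump (extE z) a (m+1) 1 1 0
      = extE z 0 0 + extE z 1 0 := by
    rw [bump_ne (by omega), bump_ne (by omega)]
  rw [hc] at J2
  set L := fderiv ℝ (hD n f) z with hLdef
  set M1 : Fin 3 → Fin (n+1) → ℝ :=
    fun i mm => if i = 2 then 0 else AA i mm.1 (extE z) with hM1
  set M2 : Fin 3 → Fin (n+1) → ℝ :=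
    fun i mm => if i = 2 then 0 else AA i mm.1 (bump (extE z) a (m+1) 1) with hM2
  have hdiff : L ((((1:ℝ), extE z 0 0 + extE z 1 0, M2) : E n)
      - (((1:ℝ), extE z 0 0 + extE z 1 0, M1) : E n)) = 0 := by
    rw [map_sub, J2, J1, sub_zero]
  have hveq : (((1:ℝ), extE z 0 0 + extE z 1 0, M2) : E n)
      - (((1:ℝ), extE z 0 0 + extE z 1 0, M1) : E n)
      = (((0:ℝ), (0:ℝ), M2 - M1) : E n) := by
    refine Prod.ext ?_ (Prod.ext ?_ rfl)
    · show (1:ℝ) - 1 = 0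
      ring
    · show extE z 0 0 + extE z 1 0 - (extE z 0 0 + extE z 1 0) = 0
      ring
  rw [hveq, clm_decomp n L] at hdiff
  have hsum : (∑ x : Fin 3 × Fin (n+1),
      (((0:ℝ), (0:ℝ), M2 - M1) : E n).2.2 x.1 x.2 * L (eJv n x.1 x.2))
      = -(cc a * 1) * L (eJv n a mF) := by
    rw [Finset.sum_eq_single_of_mem (a, mF) (Finset.mem_univ _)]
    · show (M2 - M1) a mF * L (eJv n a mF) = _
      have : (M2 - M1) a mF = -(cc a * 1) := by
        rw [Pi.sub_apply, Pi.sub_apply, hM1, hM2]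
        show (if a = 2 then 0 else AA a mF.1 (bump (extE z) a (m+1) 1))
            - (if a = 2 then 0 else AA a mF.1 (extE z)) = _
        rw [if_neg ha, if_neg ha, AA_bump (by omega) a mF.1 (by omega),
          if_pos ⟨rfl, by omega⟩]
        ring
      rw [this]
    · intro x _ hx
      show (M2 - M1) x.1 x.2 * L (eJv n x.1 x.2) = 0
      by_cases h2 : x.1 = 2
      · have : (M2 - M1) x.1 x.2 = 0 := by
          rw [Pi.sub_apply, Pi.sub_apply, hM1, hM2]
          show (if x.1 = 2 then 0 else AA x.1 x.2.1 (bump (extE z) a (m+1) 1))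
              - (if x.1 = 2 then (0:ℝ) else AA x.1 x.2.1 (extE z)) = 0
          rw [if_pos h2, if_pos h2, sub_zero]
        rw [this, zero_mul]
      · by_cases hgt : m < x.2.1
        · rw [IH x.1 h2 x.2 hgt z, mul_zero]
        · have : (M2 - M1) x.1 x.2 = 0 := by
            rw [Pi.sub_apply, Pi.sub_apply, hM1, hM2]
            show (if x.1 = 2 then 0 else AA x.1 x.2.1 (bump (extE z) a (m+1) 1))
                - (if x.1 = 2 then (0:ℝ) else AA x.1 x.2.1 (extE z)) = 0
            rw [if_neg h2, if_neg h2, AA_bump (by omega) x.1 x.2.1 (by omega)]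
            rw [if_neg (by
              intro hcon
              apply hx
              have hxm : x.2.1 = m := by omega
              have hx2 : x.2 = mF := Fin.ext (by omega)
              exact Prod.ext hcon.1 hx2)]
            ring
          rw [this, zero_mul]
  rw [hsum] at hdiff
  rw [zero_mul, zero_mul, zero_add, zero_add] at hdiff
  have := mul_eq_zero.mp hdiff
  rcases this with hcon | hgoal
  · exact absurd hcon (by
      intro hcon'
      have h1 : cc a * 1 = 0 := by linarith [neg_eq_zero.mp hcon']
      exact cc_ne_zero ha (by linarith))
  · exact hgoal

lemma dead_all {n : ℕ} {f : Jet → ℝ} {F : E n → ℝ} (hrep : Rep n f F)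
    (hB : ∀ p : Jet, Bop f p = 0) :
    ∀ (a : Fin 3), a ≠ 2 → ∀ (mF : Fin (n+1)) (z : E n),
      fderiv ℝ (hD n f) z (eJv n a mF) = 0 := by
  suffices H : ∀ (d : ℕ) (a : Fin 3), a ≠ 2 → ∀ (mF : Fin (n+1)), n ≤ mF.1 + d →
      ∀ z : E n, fderiv ℝ (hD n f) z (eJv n a mF) = 0 by
    intro a ha mF z
    exact H n a ha mF (by omega) z
  intro d
  induction d with
  | zero =>
    intro a ha mF hle z
    have hm : mF.1 = n := by
      have := mF.isLt
      omega
    exact dead_core hrep hB n le_rfl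
      (fun b hb m' hm' z' => absurd hm' (by have := m'.isLt; omega)) a ha mF hm z
  | succ d ihd =>
    intro a ha mF hle z
    by_cases hcase : n ≤ mF.1 + d
    · exact ihd a ha mF hcase z
    · have hm : mF.1 ≤ n := by have := mF.isLt; omega
      refine dead_core hrep hB mF.1 hm ?_ a ha mF rfl z
      intro b hb m' hm' z'
      exact ihd b hb m' (by omega) z'

lemma dead_x {n : ℕ} {f : Jet → ℝ} {F : E n → ℝ} (hrep : Rep n f F)
    (hB : ∀ p : Jet, Bop f p = 0) (z : E n) :
    fderiv ℝ (hD n f) z (((0:ℝ), (1:ℝ), 0) : E n) = 0 := by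
  have hsm := hD_smooth hrep
  have J1 := key_inst hrep hB z.1 z.2.1 (extE z) (extE z 2)
  have J2 := key_inst hrep hB z.1 z.2.1 (bump (extE z) 0 0 1) (extE z 2)
  rw [zee_extE] at J1
  rw [zee_bump z.1 z.2.1 (extE z) (extE z 2) 0 (by decide) 0 1, zee_extE,
    dif_pos (by omega : 0 ≤ n)] at J2
  have hder : fderiv ℝ (hD n f) (z + (1:ℝ) • eJv n 0 ⟨0, by omega⟩)
      = fderiv ℝ (hD n f) z :=
    (fderiv_translate hsm (fun z' => dead_all hrep hB 0 (by decide) ⟨0, by omega⟩ z')).2 z 1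
  rw [hder, c_bump0] at J2
  have hM : (fun i (mm : Fin (n+1)) =>
        if i = 2 then (0:ℝ) else AA i mm.1 (bump (extE z) 0 0 1))
      = fun i (mm : Fin (n+1)) => if i = 2 then (0:ℝ) else AA i mm.1 (extE z) := by
    funext i mm
    by_cases hi : i = 2
    · rw [if_pos hi, if_pos hi]
    · rw [if_neg hi, if_neg hi, AA_bump0]
  rw [hM] at J2
  have hdiff : fderiv ℝ (hD n f) z
      ((((1:ℝ), extE z 0 0 + extE z 1 0 + 1,
          fun i (mm : Fin (n+1)) => if i = 2 then (0:ℝ) else AA i mm.1 (extE z)) : E n)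
        - (((1:ℝ), extE z 0 0 + extE z 1 0,
          fun i (mm : Fin (n+1)) => if i = 2 then (0:ℝ) else AA i mm.1 (extE z)) : E n)) = 0 := by
    rw [map_sub, J2, J1, sub_zero]
  have hveq : ((((1:ℝ), extE z 0 0 + extE z 1 0 + 1,
          fun i (mm : Fin (n+1)) => if i = 2 then (0:ℝ) else AA i mm.1 (extE z)) : E n)
        - (((1:ℝ), extE z 0 0 + extE z 1 0,
          fun i (mm : Fin (n+1)) => if i = 2 then (0:ℝ) else AA i mm.1 (extE z)) : E n))
      = (((0:ℝ), (1:ℝ), 0) : E n) := by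
    refine Prod.ext ?_ (Prod.ext ?_ ?_)
    · show (1:ℝ) - 1 = 0
      ring
    · show extE z 0 0 + extE z 1 0 + 1 - (extE z 0 0 + extE z 1 0) = 1
      ring
    · show _ - _ = (0 : Fin 3 → Fin (n+1) → ℝ)
      rw [sub_self]
  rw [hveq] at hdiff
  exact hdiff

lemma dead_t {n : ℕ} {f : Jet → ℝ} {F : E n → ℝ} (hrep : Rep n f F)
    (hB : ∀ p : Jet, Bop f p = 0) (z : E n) :
    fderiv ℝ (hD n f) z (((1:ℝ), (0:ℝ), 0) : E n) = 0 := by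
  have J1 := key_inst hrep hB z.1 z.2.1 (extE z) (extE z 2)
  rw [zee_extE, clm_decomp n (fderiv ℝ (hD n f) z)] at J1
  have hx := dead_x hrep hB z
  have hsum : (∑ x : Fin 3 × Fin (n+1),
      ((((1:ℝ), extE z 0 0 + extE z 1 0,
        fun i (mm : Fin (n+1)) => if i = 2 then (0:ℝ) else AA i mm.1 (extE z)) : E n)).2.2 x.1 x.2
        * fderiv ℝ (hD n f) z (eJv n x.1 x.2)) = 0 := by
    apply Finset.sum_eq_zero
    intro x _
    by_cases h2 : x.1 = 2
    · have : ((((1:ℝ), extE z 0 0 + extE z 1 0,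
          fun i (mm : Fin (n+1)) => if i = 2 then (0:ℝ) else AA i mm.1 (extE z)) : E n)).2.2 x.1 x.2
          = 0 := by
        show (if x.1 = 2 then (0:ℝ) else AA x.1 x.2.1 (extE z)) = 0
        rw [if_pos h2]
      rw [this, zero_mul]
    · rw [dead_all hrep hB x.1 h2 x.2 z, mul_zero]
  rw [hsum, hx] at J1
  have : (1:ℝ) * fderiv ℝ (hD n f) z (((1:ℝ), (0:ℝ), 0) : E n) = 0 := by
    have h1 : ((((1:ℝ), extE z 0 0 + extE z 1 0,
        fun i (mm : Fin (n+1)) => if i = 2 then (0:ℝ) else AA i mm.1 (extE z)) : E n)).1 = 1 := rfl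
    rw [h1] at J1
    linarith [J1]
  linarith [this]

theorem forward_dir {n : ℕ} {f : Jet → ℝ} {F : E n → ℝ} (hrep : Rep n f F)
    (hB : ∀ p : Jet, Bop f p = 0) :
    ∃ g : (Fin (n+1) → ℝ) → ℝ, ContDiff ℝ (⊤ : ℕ∞) g ∧
      ∀ p : Jet, f p = g (fun j : Fin (n+1) => omegaJ j.1 p) := by
  have hsm := hD_smooth hrep
  refine ⟨fun yv => hD n f (((0:ℝ), (0:ℝ), fun i m => if i = 2 then yv m else 0) : E n),
    ?_, ?_⟩
  · apply hsm.comp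
    refine contDiff_const.prodMk (contDiff_const.prodMk ?_)
    refine contDiff_pi.2 fun i => contDiff_pi.2 fun m => ?_
    by_cases hi : i = 2
    · have : (fun yv : Fin (n+1) → ℝ => if i = 2 then yv m else (0:ℝ))
          = fun yv : Fin (n+1) → ℝ => yv m := by
        funext yv; rw [if_pos hi]
      rw [this]
      exact (ContinuousLinearMap.proj m : (Fin (n+1) → ℝ) →L[ℝ] ℝ).contDiff
    · have : (fun yv : Fin (n+1) → ℝ => if i = 2 then yv m else (0:ℝ))
          = fun _ : Fin (n+1) → ℝ => (0:ℝ) := by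
        funext yv; rw [if_neg hi]
      rw [this]
      exact contDiff_const
  · intro p
    have hmask : ∀ z : E n, hD n f z
        = hD n f (((0:ℝ), (0:ℝ), fun i m => if i = 2 then z.2.2 2 m else 0) : E n) := by
      intro z
      set w : E n := (((0:ℝ), (0:ℝ), fun i m => if i = 2 then z.2.2 2 m else 0) : E n) - z
        with hw
      have hφd : ∀ s : ℝ, HasDerivAt (fun s : ℝ => hD n f (z + s • w))
          (fderiv ℝ (hD n f) (z + s • w) w) s := by
        intro s
        have hline : HasDerivAt (fun s : ℝ => z + s • w) w s := by
          simpa using ((hasDerivAt_id s).smul_const w).const_add z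
        exact (hsm.differentiable (by simp) _).hasFDerivAt.comp_hasDerivAt s hline
      have hφz : ∀ s : ℝ, fderiv ℝ (hD n f) (z + s • w) w = 0 := by
        intro s
        rw [clm_decomp n (fderiv ℝ (hD n f) (z + s • w)) w]
        rw [dead_t hrep hB, dead_x hrep hB, mul_zero, mul_zero]
        rw [Finset.sum_eq_zero, add_zero, add_zero]
        intro x _
        by_cases h2 : x.1 = 2
        · have : w.2.2 x.1 x.2 = 0 := by
            rw [hw]
            show (if x.1 = 2 then z.2.2 2 x.2 else 0) - z.2.2 x.1 x.2 = 0
            rw [if_pos h2, h2, sub_self]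
          rw [this, zero_mul]
        · rw [dead_all hrep hB x.1 h2 x.2, mul_zero]
      have hconst := is_const_of_deriv_eq_zero
        (f := fun s : ℝ => hD n f (z + s • w))
        (fun s => (hφd s).differentiableAt)
        (fun s => by rw [(hφd s).deriv, hφz s]) 1 0
      have hfin : z + (1:ℝ) • w
          = (((0:ℝ), (0:ℝ), fun i m => if i = 2 then z.2.2 2 m else 0) : E n) := by
        rw [hw, one_smul, add_sub_cancel]
      rw [← hfin]
      simpa using hconst.symm
    rw [f_eq_hZp hrep p, hmask (ZpD n p)]
    congr 1

theorem kernel_of_B_iff_function_of_omegas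
    (n : ℕ) (f : Jet → ℝ) (hf : IsDiffFun n f) :
    (∀ p : Jet, Bop f p = 0) ↔
      ∃ (κ : ℕ) (g : (Fin (κ + 1) → ℝ) → ℝ), ContDiff ℝ (⊤ : ℕ∞) g ∧
        ∀ p : Jet, f p = g (fun j => omegaJ j.1 p) := by
  constructor
  · intro hB
    obtain ⟨F, hF, hFval⟩ := hf
    have hrep : Rep n f F := ⟨hF, fun p => hFval p⟩
    obtain ⟨g, hg, hfg⟩ := forward_dir hrep hB
    exact ⟨n, g, hg, hfg⟩
  · rintro ⟨κ, g, hg, hfg⟩ p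
    have hfe : f = fun q => g (fun j : Fin (κ+1) => omegaJ j.1 q) := funext hfg
    rw [hfe]
    exact Bop_comp_omegas κ g hg p

end IDFM

end
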